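/- Let r ≥ 1 and i_0 ≥ 0 be integers. Suppose δ_{r−1}(i+1) ≤ δ_{r−1}(i) for every i ≥ i_0, and suppose there is an integer i' > i_0 with δ_r(i') < δ_r(i'−1). Then δ_r(i+1) ≤ δ_r(i) for every i ≥ i'; that is, once δ_r strictly decreases after the point where δ_{r−1} has become non-increasing, δ_r remains non-increasing forever. -/

import Mathlib

/-!
The number `countDvd i x` of primes among `p₀, …, p_i` dividing `x` is `P(i)`-periodic in `x`,
and `countDvd (i+1) x = countDvd i x + [p_{i+1} ∣ x]`. As `p_{i+1}` is coprime to `P(i)`, the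
multiples of `p_{i+1}` below `P(i+1)` meet every residue class mod `P(i)` exactly once, whence
`δ_r(i+1) = δ_r(i) - (δ_r(i) - δ_{r-1}(i)) / p_{i+1}`.
Each step thus moves `δ_r` the fraction `1/p_{i+1} ≤ 1` of the way towards `δ_{r-1}`: `δ_r` does
not increase at `i` iff `δ_{r-1}(i) ≤ δ_r(i)`, and this inequality, forced at `i' - 1` by the drop,
persists as long as `δ_{r-1}` is non-increasing.
-/

/-- `pp i` is the `i`-th prime (`pp 0 = 2`, `pp 1 = 3`, `pp 2 = 5`, ...). -/
noncomputable def pp (i : ℕ) : ℕ := Nat.nth Nat.Prime i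

/-- `PP i = p₀ · p₁ ⋯ p_i`, the product of the first `i+1` primes. -/
noncomputable def PP (i : ℕ) : ℕ := ∏ j ∈ Finset.range (i + 1), pp j

/-- `del r i` is the density `δ_r(i)` of positive integers having exactly `r`
prime divisors among `p₀, ..., p_i`: the proportion of `x ∈ {1, ..., PP i}`
divisible by exactly `r` of the primes `p₀, ..., p_i`. -/
noncomputable def del (r i : ℕ) : ℚ :=
  (((Finset.Icc 1 (PP i)).filter
      (fun x => ((Finset.range (i + 1)).filter (fun j => pp j ∣ x)).card = r)).card : ℚ) /
    (PP i : ℚ)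

/-- `dd k i` is the density `d_k(p_i)` of positive integers whose `k`-th smallest
prime factor is `p_i`: the proportion of `x ∈ {1, ..., PP i}` divisible by `p_i`
and by exactly `k-1` of the primes `p₀, ..., p_{i-1}`. -/
noncomputable def dd (k i : ℕ) : ℚ :=
  (((Finset.Icc 1 (PP i)).filter
      (fun x => pp i ∣ x ∧
        ((Finset.range i).filter (fun j => pp j ∣ x)).card = k - 1)).card : ℚ) /
    (PP i : ℚ)

open Finset Function Nat

section PeriodicCount

variable {P : ℕ → Prop} [DecidablePred P] {n : ℕ}

lemma count_mul_of_periodic (hP : Periodic P n) (m : ℕ) : count P (n * m) = m * count P n := by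
  induction m with
  | zero => simp
  | succ m ih =>
    have hshift : (fun k => P (n * m + k)) = P :=
      funext fun k => by rw [add_comm, mul_comm]; exact hP.nat_mul m k
    rw [Nat.mul_succ, count_add, ih, Nat.succ_mul]
    simp only [hshift]

lemma card_filter_range_eq_card_filter_zmod [NeZero n] (Q : ZMod n → Prop) [DecidablePred Q] :
    #((range n).filter fun y : ℕ => Q y) = #{z : ZMod n | Q z} :=
  card_nbij' Nat.cast ZMod.val (by intro y; simp) (by intro z; simp [ZMod.val_lt])
    (by intro y hy; simp_all [Nat.mod_eq_of_lt]) (by intro z _; simp)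

lemma count_comp_mul_of_coprime (hP : Periodic P n) {p : ℕ} (hpn : p.Coprime n) :
    count (fun y => P (p * y)) n = count P n := by
  rcases n.eq_zero_or_pos with rfl | hn
  · simp
  have : NeZero n := ⟨hn.ne'⟩
  have hPQ : ∀ y : ℕ, P y ↔ P (y : ZMod n).val := fun y => by
    rw [ZMod.val_natCast, hP.map_mod_nat]
  let u := ZMod.unitOfCoprime p hpn
  simp only [count_eq_card_filter_range]
  calc #{y ∈ range n | P (p * y)} = #{z : ZMod n | P (u * z : ZMod n).val} := by
        rw [← card_filter_range_eq_card_filter_zmod]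
        congr! 2 with y
        simp [u, hPQ]
    _ = #{z : ZMod n | P z.val} := card_equiv (Units.mulLeft u) (by simp)
    _ = #{y ∈ range n | P y} := by
        rw [← card_filter_range_eq_card_filter_zmod]
        simp [hPQ]

lemma count_and_dvd {p : ℕ} (hp : 0 < p) :
    count (fun x => P x ∧ p ∣ x) (n * p) = count (fun y => P (p * y)) n := by
  simp only [count_eq_card_filter_range]
  rw [eq_comm, ← card_image_of_injective _ (mul_right_injective₀ hp.ne')]
  congr 1
  ext x
  simp only [mem_filter, mem_range, mem_image]
  constructor
  · rintro ⟨y, ⟨hy, hPy⟩, rfl⟩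
    exact ⟨by nlinarith, hPy, dvd_mul_right p y⟩
  · rintro ⟨hx, hPx, y, rfl⟩
    exact ⟨y, ⟨by nlinarith, hPx⟩, rfl⟩

lemma count_and_dvd_of_coprime (hP : Periodic P n) {p : ℕ} (hp : 0 < p) (hpn : p.Coprime n) :
    count (fun x => P x ∧ p ∣ x) (n * p) = count P n := by
  rw [count_and_dvd hp, count_comp_mul_of_coprime hP hpn]

lemma count_eq_count_and_add_count_and_not (q : ℕ → Prop) [DecidablePred q] (N : ℕ) :
    count P N = count (fun x => P x ∧ q x) N + count (fun x => P x ∧ ¬ q x) N := by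
  simp only [count_eq_card_filter_range, ← filter_filter]
  exact (card_filter_add_card_filter_not _).symm

end PeriodicCount

lemma count_add_ite_dvd_eq {n p : ℕ} {f : ℕ → ℕ} (hf : Periodic f n) (hp : 0 < p)
    (hpn : p.Coprime n) (r : ℕ) :
    count (fun x => f x + (if p ∣ x then 1 else 0) = r) (n * p)
      = (p - 1) * count (fun x => f x = r) n + count (fun x => f x + 1 = r) n := by
  have hfr : Periodic (fun x => f x = r) n := hf.comp (· = r)
  have hfr' : Periodic (fun x => f x + 1 = r) n := hf.comp (· + 1 = r)
  have hnot :
      count (fun x => f x = r ∧ ¬ p ∣ x) (n * p) = (p - 1) * count (fun x => f x = r) n := by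
    have hsplit := count_eq_count_and_add_count_and_not (P := fun x => f x = r) (p ∣ ·) (n * p)
    rw [count_mul_of_periodic hfr, count_and_dvd_of_coprime hfr hp hpn] at hsplit
    rw [Nat.sub_one_mul]
    omega
  have hon : (fun x => f x + (if p ∣ x then 1 else 0) = r ∧ p ∣ x)
      = fun x => f x + 1 = r ∧ p ∣ x := funext fun x => by by_cases h : p ∣ x <;> simp [h]
  have hoff : (fun x => f x + (if p ∣ x then 1 else 0) = r ∧ ¬ p ∣ x)
      = fun x => f x = r ∧ ¬ p ∣ x := funext fun x => by by_cases h : p ∣ x <;> simp [h]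
  rw [count_eq_count_and_add_count_and_not (p ∣ ·)]
  simp only [hon, hoff]
  rw [hnot, count_and_dvd_of_coprime hfr' hp hpn, add_comm]

lemma pp_prime (i : ℕ) : (pp i).Prime := Nat.prime_nth_prime i

lemma pp_dvd_PP {i j : ℕ} (h : j ≤ i) : pp j ∣ PP i :=
  dvd_prod_of_mem _ (mem_range.mpr (Nat.lt_succ_of_le h))

lemma PP_succ (i : ℕ) : PP (i + 1) = PP i * pp (i + 1) := prod_range_succ _ _

lemma PP_pos (i : ℕ) : 0 < PP i := prod_pos fun j _ => (pp_prime j).pos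

lemma coprime_pp_succ_PP (i : ℕ) : (pp (i + 1)).Coprime (PP i) :=
  Nat.Coprime.prod_right fun j hj => (Nat.coprime_primes (pp_prime _) (pp_prime j)).mpr
    ((Nat.nth_strictMono Nat.infinite_setOfPred_prime (mem_range.mp hj)).ne')

noncomputable def countDvd (i x : ℕ) : ℕ := #{j ∈ range (i + 1) | pp j ∣ x}

lemma countDvd_periodic (i : ℕ) : Periodic (countDvd i) (PP i) := fun x => by
  unfold countDvd
  congr 1
  exact filter_congr fun j hj =>
    Nat.dvd_add_left (pp_dvd_PP (Nat.lt_succ_iff.mp (mem_range.mp hj)))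

lemma countDvd_succ (i x : ℕ) :
    countDvd (i + 1) x = countDvd i x + if pp (i + 1) ∣ x then 1 else 0 := by
  simp only [countDvd, card_filter, sum_range_succ]

lemma del_eq_count (r i : ℕ) : del r i = count (fun x => countDvd i x = r) (PP i) / PP i := by
  have hperiodic : Periodic (fun x => countDvd i x = r) (PP i) :=
    (countDvd_periodic i).comp (· = r)
  rw [← filter_Ico_card_eq_of_periodic 1 _ _ hperiodic, add_comm, Ico_add_one_right_eq_Icc]
  rfl

lemma count_countDvd_succ (r i : ℕ) :
    count (fun x => countDvd (i + 1) x = r + 1) (PP (i + 1))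
      = (pp (i + 1) - 1) * count (fun x => countDvd i x = r + 1) (PP i)
        + count (fun x => countDvd i x = r) (PP i) := by
  simp only [countDvd_succ, PP_succ]
  rw [count_add_ite_dvd_eq (countDvd_periodic i) (pp_prime _).pos (coprime_pp_succ_PP i)]
  simp only [Nat.add_right_cancel_iff]

lemma del_succ (r i : ℕ) :
    del (r + 1) (i + 1) = del (r + 1) i - (del (r + 1) i - del r i) / pp (i + 1) := by
  have hp : (0 : ℚ) < pp (i + 1) := by exact_mod_cast (pp_prime _).pos
  have hPP : (0 : ℚ) < PP i := by exact_mod_cast PP_pos i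
  rw [del_eq_count, del_eq_count, del_eq_count, count_countDvd_succ, PP_succ]
  push_cast [(pp_prime _).one_le]
  field_simp
  ring

section Relaxation

variable {K : Type*} [Field K] [LinearOrder K] [IsStrictOrderedRing K] {a b q : ℕ → K}

lemma succ_le_iff_of_step (hstep : ∀ i, a (i + 1) = a i - (a i - b i) / q i) {i : ℕ}
    (hq : 0 < q i) : a (i + 1) ≤ a i ↔ b i ≤ a i := by
  rw [hstep, sub_le_self_iff, le_div_iff₀ hq, zero_mul, sub_nonneg]

lemma le_succ_of_step (hstep : ∀ i, a (i + 1) = a i - (a i - b i) / q i) {i : ℕ}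
    (hq : 1 ≤ q i) (h : b i ≤ a i) : b i ≤ a (i + 1) := by
  have : (a i - b i) / q i ≤ a i - b i := div_le_self (sub_nonneg.mpr h) hq
  rw [hstep]
  linarith

lemma succ_le_of_step_of_succ_lt (hstep : ∀ i, a (i + 1) = a i - (a i - b i) / q i)
    (hq : ∀ i, 1 ≤ q i) {i₀ j : ℕ} (hb : ∀ i, i₀ ≤ i → b (i + 1) ≤ b i) (hj : i₀ ≤ j)
    (hdrop : a (j + 1) < a j) : ∀ i, j ≤ i → a (i + 1) ≤ a i := by
  have hq₀ (i : ℕ) : 0 < q i := zero_lt_one.trans_le (hq i)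
  have hinv : ∀ i, j ≤ i → b i ≤ a i := by
    intro i hi
    induction i, hi using Nat.le_induction with
    | base => exact (succ_le_iff_of_step hstep (hq₀ j)).mp hdrop.le
    | succ i hji ih => exact (hb i (hj.trans hji)).trans (le_succ_of_step hstep (hq i) ih)
  exact fun i hi => (succ_le_iff_of_step hstep (hq₀ i)).mpr (hinv i hi)

end Relaxation

/-- If `δ_{r−1}` is non-increasing from `i₀` on, and `δ_r` strictly decreases at
some `i' > i₀`, then `δ_r` is non-increasing from `i'` on. -/
theorem del_eventually_nonincreasing (r i₀ i' : ℕ) (hr : 1 ≤ r)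
    (h₁ : ∀ i : ℕ, i₀ ≤ i → del (r - 1) (i + 1) ≤ del (r - 1) i)
    (h₂ : i₀ < i') (h₃ : del r i' < del r (i' - 1)) :
    ∀ i : ℕ, i' ≤ i → del r (i + 1) ≤ del r i := by
  obtain ⟨s, rfl⟩ := Nat.exists_eq_add_of_le' hr
  obtain ⟨j, rfl⟩ : ∃ j, i' = j + 1 := ⟨i' - 1, by omega⟩
  have hq (i : ℕ) : (1 : ℚ) ≤ pp (i + 1) := by exact_mod_cast (pp_prime _).one_le
  intro i hi
  exact succ_le_of_step_of_succ_lt (del_succ s) hq h₁ (Nat.le_of_lt_succ h₂) h₃ i (by omega)
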